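/- arXiv:1505.06069 — 3 statements merged into one kernel-verified Lean document; each statement's English description precedes it below -/
import Mathlib

section
/- Let G = (V, E) be an N-edge-connected finite multigraph with |V| ≤ N^{2d}, and let ω₁ be an (ε/(4d))-percolation on G. For every fixed subset X ⊆ E, the probability that the number of connected components K(X ∪ ω₁) exceeds max(1, K(X)/√N) is at most √N · N^{2d√N} · (1 − ε/(4d))^N. -/
open MeasureTheory Real Set
open scoped ENNReal Classical

namespace Perco

/-- Reachability in a multigraph given by an endpoint map `ends`, using only edges in `X`. -/
def Reach {V E : Type*} (ends : E → V × V) (X : Set E) (a b : V) : Prop :=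
  Relation.ReflTransGen (fun u v => ∃ e ∈ X, ends e = (u, v) ∨ ends e = (v, u)) a b

/-- The graph `(V, X)` is connected. -/
def Connected {V E : Type*} (ends : E → V × V) (X : Set E) : Prop :=
  ∀ a b : V, Reach ends X a b

/-- `N`-edge-connectivity: connected, and removal of any set of at most `N` edges
keeps the graph connected. -/
def EdgeConnected {V E : Type*} (ends : E → V × V) (N : ℕ) : Prop :=
  Connected ends Set.univ ∧ ∀ F : Finset E, F.card ≤ N → Connected ends ((F : Set E)ᶜ)

/-- The edge boundary of a vertex set `S`: edges with exactly one endpoint in `S`. -/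
def cut {V E : Type*} (ends : E → V × V) (S : Set V) : Set E :=
  {e | ((ends e).1 ∈ S ∧ (ends e).2 ∉ S) ∨ ((ends e).1 ∉ S ∧ (ends e).2 ∈ S)}

/-- The number of connected components of the graph `(V, X)`. -/
noncomputable def K {V E : Type*} (ends : E → V × V) (X : Set E) : ℕ :=
  Set.ncard {C : Set V | ∃ v, C = {w | Reach ends X v w}}

/-- Product Bernoulli percolation with edge-dependent parameters `p e`. -/
def IsBernoulliFam {E : Type*} (p : E → ℝ≥0∞) (μ : Measure (E → Bool)) : Prop :=
  IsProbabilityMeasure μ ∧ ∀ (F : Finset E) (f : E → Bool),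
    μ {c | ∀ e ∈ F, c e = f e} = ∏ e ∈ F, (if f e then p e else 1 - p e)

/-- `ε`-Bernoulli percolation: each edge open independently with probability `ε`. -/
def IsBernoulli {E : Type*} (ε : ℝ≥0∞) (μ : Measure (E → Bool)) : Prop :=
  IsBernoulliFam (fun _ => ε) μ

/-- Set of open edges of a configuration. -/
def toSet {E : Type*} (c : E → Bool) : Set E := {e | c e = true}

/-- Increasing (upward closed) event. -/
def IncreasingEvent {E : Type*} (S : Set (E → Bool)) : Prop :=
  ∀ c c', c ∈ S → (∀ e, c e = true → c' e = true) → c' ∈ S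

/-- The event `S` depends only on the coordinates in `A`. -/
def DependsOn {E : Type*} (S : Set (E → Bool)) (A : Set E) : Prop :=
  ∀ c c', (∀ e ∈ A, c e = c' e) → (c ∈ S ↔ c' ∈ S)

/-- Vertices of `ℤ^d`. -/
abbrev Vtx (d : ℕ) := Fin d → ℤ

/-- Edges of `ℤ^d`: the pair `(x, i)` encodes the edge `{x, x + eᵢ}`. -/
abbrev EdgeZ (d : ℕ) := Vtx d × Fin d

/-- The `i`-th coordinate unit vector. -/
def unit (d : ℕ) (i : Fin d) : Vtx d := fun j => if j = i then 1 else 0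

/-- Endpoints of a lattice edge. -/
def ends' (d : ℕ) (e : EdgeZ d) : Vtx d × Vtx d := (e.1, e.1 + unit d e.2)

/-- `a` and `b` are `X`-connected inside the vertex set `S`. -/
def ConnIn (d : ℕ) (X : Set (EdgeZ d)) (S : Set (Vtx d)) (a b : Vtx d) : Prop :=
  a ∈ S ∧ b ∈ S ∧ Relation.ReflTransGen
    (fun u v => (∃ e ∈ X, ends' d e = (u, v) ∨ ends' d e = (v, u)) ∧ u ∈ S ∧ v ∈ S) a b

/-- The box `Λ_r = [-r, r]^d ∩ ℤ^d`. -/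
def box (d : ℕ) (r : ℝ) : Set (Vtx d) := {x | ∀ i, |(x i : ℝ)| ≤ r}

/-- `X` is everywhere percolating: every vertex lies in an infinite `X`-component. -/
def EverywherePerc (d : ℕ) (X : Set (EdgeZ d)) : Prop :=
  ∀ x : Vtx d, {y | ConnIn d X Set.univ x y}.Infinite

/-- Connected components of the graph induced by `X` on the box `Λ_R`. -/
def clusters (d : ℕ) (X : Set (EdgeZ d)) (R : ℝ) : Set (Set (Vtx d)) :=
  {C | ∃ x ∈ box d R, C = {y | ConnIn d X (box d R) x y}}

/-- `U_{0,b}(X)`: the number of components of `X` in `Λ_{8dn}` meeting `Λ_b`. -/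
noncomputable def U0 (d n : ℕ) (X : Set (EdgeZ d)) (b : ℝ) : ℕ :=
  Set.ncard {C | C ∈ clusters d X (8*d*n) ∧ (C ∩ box d b).Nonempty}

/-- `U_{a,b}(X)`: components of `X` in `Λ_{8dn}` avoiding `Λ_a` and meeting `Λ_b`. -/
noncomputable def Uab (d n : ℕ) (X : Set (EdgeZ d)) (a b : ℝ) : ℕ :=
  Set.ncard {C | C ∈ clusters d X (8*d*n) ∧ C ∩ box d a = ∅ ∧ (C ∩ box d b).Nonempty}

/-- The edge `e` has both endpoints in the vertex set `S`. -/
def edgeIn (d : ℕ) (S : Set (Vtx d)) (e : EdgeZ d) : Prop :=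
  e.1 ∈ S ∧ e.1 + unit d e.2 ∈ S

/-- The annulus `A_{r,R} = Λ_R \ Λ_r`. -/
def annulus (d : ℕ) (r R : ℝ) : Set (Vtx d) := box d R \ box d r

/-- `Y` percolates in `S`: the graph induced by `Y` on `S` has an infinite component. -/
def Percolates (d : ℕ) (Y : Set (EdgeZ d)) (S : Set (Vtx d)) : Prop :=
  ∃ x ∈ S, {y | ConnIn d Y S x y}.Infinite

/-- Endpoints of a lattice edge, as a set. -/
def endpoints (d : ℕ) (e : EdgeZ d) : Set (Vtx d) := {e.1, e.1 + unit d e.2}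

/-- Every edge of `A` is at `L^∞` distance at least 3 from every edge of `B`. -/
def FarApart (d : ℕ) (A B : Set (EdgeZ d)) : Prop :=
  ∀ e ∈ A, ∀ f ∈ B, ∀ p ∈ endpoints d e, ∀ q ∈ endpoints d f, ∃ i, 3 ≤ |p i - q i|

/-- The renormalized configuration `Y^{(n)}`: the edge `{x,y}` is open iff `2nx` is
`Y`-connected to `2ny` inside `n(x+y) + Λ_{2n}`. -/
noncomputable def renorm (d n : ℕ) (Y : Set (EdgeZ d)) : EdgeZ d → Bool := fun e =>
  if ConnIn d Y
      {z : Vtx d | ∀ i, |z i - (n : ℤ) * (e.1 i + (e.1 + unit d e.2) i)| ≤ 2 * (n : ℤ)}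
      ((2 * (n : ℤ)) • e.1) ((2 * (n : ℤ)) • (e.1 + unit d e.2))
  then true else false

/-- The critical parameter for Bernoulli bond percolation on `ℤ^d`. -/
noncomputable def pc (d : ℕ) : ℝ≥0∞ :=
  sSup {p : ℝ≥0∞ | p ≤ 1 ∧ ∀ μ : Measure (EdgeZ d → Bool), IsBernoulli p μ →
    μ {c | Percolates d (toSet c) Set.univ} = 0}

/-!
If `K(X ∪ ω₁) > max(1, K(X)/√N)`, pigeonhole over the components of `X ∪ ω₁` yields one of
them, `S ≠ V`, that is a union of fewer than `√N` components of `X`. Every boundary edge of `S` is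
`ω₁`-closed, and by `N`-edge-connectivity there are at least `N` of them, so this happens with
probability at most `(1 - ε/4d)^N`. A union bound over the at most
`√N · K(X)^√N ≤ √N · N^{2d√N}` such families of components gives the estimate.
-/

section Components

variable {V E : Type*} (ends : E → V × V)

def component (X : Set E) (v : V) : Set V := {w | Reach ends X v w}

noncomputable def components [Fintype V] (X : Set E) : Finset (Set V) :=
  Finset.univ.image (component ends X)

variable {ends} {X Y : Set E} {a b v w : V}

theorem Reach.mono (hXY : X ⊆ Y) (h : Reach ends X a b) : Reach ends Y a b :=
  Relation.ReflTransGen.mono (fun _ _ ⟨e, he, hends⟩ => ⟨e, hXY he, hends⟩) a b h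

theorem Reach.symm (h : Reach ends X a b) : Reach ends X b a := by
  induction h with
  | refl => exact .refl
  | tail _ hstep ih =>
    obtain ⟨e, he, hends⟩ := hstep
    exact .head ⟨e, he, hends.symm⟩ ih

theorem mem_component_self : v ∈ component ends X v := Relation.ReflTransGen.refl

theorem component_eq_of_mem (h : w ∈ component ends X v) :
    component ends X w = component ends X v :=
  Set.ext fun _ => ⟨fun hu => Relation.ReflTransGen.trans h hu,
    fun hu => Relation.ReflTransGen.trans (Reach.symm h) hu⟩

theorem component_subset_component (hXY : X ⊆ Y) : component ends X v ⊆ component ends Y v :=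
  fun _ => Reach.mono hXY

theorem mem_components [Fintype V] {C : Set V} :
    C ∈ components ends X ↔ ∃ v, component ends X v = C := by
  simp [components]

theorem K_eq_card_components [Fintype V] : K ends X = (components ends X).card := by
  rw [K, ← Set.ncard_coe_finset]
  congr 1
  ext C
  simp [components, component, eq_comm]

theorem K_le_card [Fintype V] : K ends X ≤ Fintype.card V :=
  K_eq_card_components.trans_le Finset.card_image_le

theorem exists_notMem_component [Fintype V] (hY : 1 < K ends Y) (v : V) :
    ∃ u, u ∉ component ends Y v := by
  rw [K_eq_card_components] at hY
  obtain ⟨D, hD, hne⟩ := Finset.exists_mem_ne hY (component ends Y v)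
  obtain ⟨u, rfl⟩ := mem_components.1 hD
  exact ⟨u, fun hu => hne (component_eq_of_mem hu)⟩

theorem cut_component_disjoint : Disjoint (cut ends (component ends X v)) X := by
  refine Set.disjoint_left.2 fun e he heX => ?_
  rcases he with ⟨h₁, h₂⟩ | ⟨h₁, h₂⟩
  · exact h₂ (Relation.ReflTransGen.tail h₁ ⟨e, heX, Or.inl rfl⟩)
  · exact h₁ (Relation.ReflTransGen.tail h₂ ⟨e, heX, Or.inr rfl⟩)

theorem Reach.mem_of_compl_cut {S : Set V} (h : Reach ends (cut ends S)ᶜ a b) (ha : a ∈ S) :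
    b ∈ S := by
  induction h with
  | refl => exact ha
  | tail _ hstep ih =>
    obtain ⟨e, he, hends⟩ := hstep
    by_contra hb
    apply he
    rcases hends with h | h <;> simp [cut, h, ih, hb]

theorem EdgeConnected.le_ncard_cut [Finite E] {N : ℕ} (hG : EdgeConnected ends N) {S : Set V}
    (ha : a ∈ S) (hb : b ∉ S) : N ≤ (cut ends S).ncard := by
  by_contra! hlt
  have hab := hG.2 (Set.toFinite (cut ends S)).toFinset
    (by rw [← Set.ncard_eq_toFinset_card]; exact hlt.le) a b
  rw [Set.Finite.coe_toFinset] at hab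
  exact hb (hab.mem_of_compl_cut ha)

/-- Pigeonhole over the fibres of the map sending an `X`-component to the `Y`-component
containing it. -/
theorem exists_sUnion_eq_component [Fintype V] (hXY : X ⊆ Y) {s : ℝ}
    (h : (K ends X : ℝ) < s * K ends Y) :
    ∃ v, ∃ T ⊆ components ends X, T.Nonempty ∧ (T.card : ℝ) < s ∧
      ⋃₀ (T : Set (Set V)) = component ends Y v := by
  set hull : Set V → Set V := fun C => ⋃ u ∈ C, component ends Y u
  have hull_component : ∀ v, hull (component ends X v) = component ends Y v := fun v => by
    refine Set.Subset.antisymm (Set.iUnion₂_subset fun u hu => ?_)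
      (Set.subset_biUnion_of_mem (u := fun u => component ends Y u) mem_component_self)
    rw [component_eq_of_mem (component_subset_component hXY hu)]
  have hmaps : Set.MapsTo hull (components ends X) (components ends Y) := by
    intro C hC
    obtain ⟨v, rfl⟩ := mem_components.1 hC
    exact mem_components.2 ⟨v, (hull_component v).symm⟩
  obtain ⟨D, hD, hlt⟩ : ∃ D ∈ components ends Y,
      ((((components ends X).filter (hull · = D)).card : ℕ) : ℝ) < s := by
    apply Finset.exists_lt_of_sum_lt
    rwa [Finset.sum_const, nsmul_eq_mul, ← Nat.cast_sum,
      ← Finset.card_eq_sum_card_fiberwise hmaps, ← K_eq_card_components,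
      ← K_eq_card_components, mul_comm]
  obtain ⟨v, rfl⟩ := mem_components.1 hD
  have hself : component ends X v ∈ (components ends X).filter (hull · = component ends Y v) :=
    Finset.mem_filter.2 ⟨mem_components.2 ⟨v, rfl⟩, hull_component v⟩
  refine ⟨v, _, Finset.filter_subset _ _, ⟨_, hself⟩, hlt, ?_⟩
  ext w
  simp only [Set.mem_sUnion, Finset.coe_filter, Set.mem_ofPred_eq]
  constructor
  · rintro ⟨C, ⟨-, hC⟩, hwC⟩
    exact hC ▸ Set.mem_biUnion hwC mem_component_self
  · intro hw
    refine ⟨component ends X w, ⟨mem_components.2 ⟨w, rfl⟩, ?_⟩, mem_component_self⟩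
    rw [hull_component, component_eq_of_mem hw]

end Components

section Counting

variable {V E : Type*} (ends : E → V × V)

/-- The candidates for a vertex set `S` generated by `X` with `1 ≤ m(S) ≤ M` components and
at least `N` boundary edges, each recorded by its family of `X`-components. -/
noncomputable def smallFamilies [Fintype V] (X : Set E) (M N : ℕ) : Finset (Finset (Set V)) :=
  ((Finset.Icc 1 M).biUnion fun m => (components ends X).powersetCard m).filter
    fun T => N ≤ (cut ends (⋃₀ (T : Set (Set V)))).ncard

theorem card_biUnion_powersetCard_le {α : Type*} [DecidableEq α] (s : Finset α) (M : ℕ) :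
    ((Finset.Icc 1 M).biUnion fun m => s.powersetCard m).card ≤ M * s.card ^ M := by
  calc _ ≤ ∑ m ∈ Finset.Icc 1 M, (s.powersetCard m).card := Finset.card_biUnion_le
    _ ≤ ∑ _m ∈ Finset.Icc 1 M, s.card ^ M := Finset.sum_le_sum fun m hm => ?_
    _ = M * s.card ^ M := by simp
  obtain ⟨hm1, hmM⟩ := Finset.mem_Icc.1 hm
  rw [Finset.card_powersetCard]
  rcases Nat.eq_zero_or_pos s.card with h0 | hpos
  · simp [h0, Nat.choose_eq_zero_of_lt hm1]
  · exact (Nat.choose_le_pow _ _).trans (Nat.pow_le_pow_right hpos hmM)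

theorem card_smallFamilies_le [Fintype V] (X : Set E) (M N : ℕ) :
    (smallFamilies ends X M N).card ≤ M * K ends X ^ M := by
  rw [K_eq_card_components]
  exact (Finset.card_filter_le _ _).trans (card_biUnion_powersetCard_le _ _)

theorem floor_mul_pow_floor_le {x b : ℝ} (hx : 0 ≤ x) (hb : 1 ≤ b) {n : ℕ}
    (hn : (n : ℝ) ≤ b) :
    (⌊x⌋₊ : ℝ) * n ^ ⌊x⌋₊ ≤ x * b ^ x := by
  have hpow : (n : ℝ) ^ ⌊x⌋₊ ≤ b ^ x := calc
    _ ≤ b ^ ⌊x⌋₊ := pow_le_pow_left₀ n.cast_nonneg hn _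
    _ = b ^ (⌊x⌋₊ : ℝ) := (Real.rpow_natCast b _).symm
    _ ≤ b ^ x := Real.rpow_le_rpow_of_exponent_le hb (Nat.floor_le hx)
  exact mul_le_mul (Nat.floor_le hx) hpow (by positivity) hx

theorem card_smallFamilies_sqrt_le [Fintype V] {N d : ℕ} (hN : 1 ≤ N)
    (hV : Fintype.card V ≤ N ^ (2 * d)) (X : Set E) :
    ((smallFamilies ends X ⌊Real.sqrt N⌋₊ N).card : ℝ) ≤
      Real.sqrt N * (N : ℝ) ^ (2 * (d : ℝ) * Real.sqrt N) := by
  have hK : (K ends X : ℝ) ≤ (N : ℝ) ^ (2 * d) := by exact_mod_cast K_le_card.trans hV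
  calc ((smallFamilies ends X ⌊Real.sqrt N⌋₊ N).card : ℝ)
      ≤ ⌊Real.sqrt N⌋₊ * (K ends X : ℝ) ^ ⌊Real.sqrt N⌋₊ := by
        exact_mod_cast card_smallFamilies_le ends X _ N
    _ ≤ Real.sqrt N * ((N : ℝ) ^ (2 * d)) ^ Real.sqrt N :=
      floor_mul_pow_floor_le (Real.sqrt_nonneg _) (one_le_pow₀ (by exact_mod_cast hN)) hK
    _ = Real.sqrt N * (N : ℝ) ^ (2 * (d : ℝ) * Real.sqrt N) := by
      rw [← Real.rpow_natCast_mul N.cast_nonneg]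
      push_cast
      rfl

end Counting

section Percolation

variable {V E : Type*} {ends : E → V × V}

theorem setOf_max_lt_K_subset [Fintype V] [Finite E] {N : ℕ} (hG : EdgeConnected ends N)
    {s : ℝ} (hs : 0 < s) (X : Set E) :
    {c : E → Bool | max 1 ((K ends X : ℝ) / s) < K ends (X ∪ toSet c)} ⊆
      ⋃ T ∈ smallFamilies ends X ⌊s⌋₊ N,
        {c | ∀ e ∈ cut ends (⋃₀ (T : Set (Set V))), c e = false} := by
  intro c hc
  rw [Set.mem_ofPred_eq, max_lt_iff, div_lt_iff₀ hs] at hc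
  obtain ⟨v, T, hTX, hTne, hTs, hTD⟩ :=
    exists_sUnion_eq_component (ends := ends) (Set.subset_union_left (t := toSet c))
      (s := s) (by linarith [hc.2])
  obtain ⟨u, hu⟩ := exists_notMem_component (by exact_mod_cast hc.1) v
  have hT : T ∈ smallFamilies ends X ⌊s⌋₊ N := by
    simp only [smallFamilies, Finset.mem_filter, Finset.mem_biUnion, Finset.mem_Icc,
      Finset.mem_powersetCard]
    refine ⟨⟨T.card, ⟨hTne.card_pos, Nat.le_floor hTs.le⟩, hTX, rfl⟩, ?_⟩
    rw [hTD]
    exact hG.le_ncard_cut mem_component_self hu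
  refine Set.mem_biUnion hT fun e he => ?_
  rw [hTD] at he
  have hclosed : e ∉ toSet c :=
    fun h => Set.disjoint_left.1 cut_component_disjoint he (Or.inr h)
  simpa [toSet] using hclosed

theorem IsBernoulli.measure_forall_eq_false_le [Finite E] {p : ℝ≥0∞}
    {μ : Measure (E → Bool)} (hμ : IsBernoulli p μ) {F : Set E} {N : ℕ} (hN : N ≤ F.ncard) :
    μ {c | ∀ e ∈ F, c e = false} ≤ (1 - p) ^ N := by
  have h := hμ.2 (Set.toFinite F).toFinset fun _ => false
  simp only [Set.Finite.mem_toFinset, Bool.false_eq_true, if_false, Finset.prod_const] at h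
  rw [h, ← Set.ncard_eq_toFinset_card]
  exact pow_le_pow_of_le_one zero_le tsub_le_self hN

end Percolation

theorem stmt3_general {V E : Type*} [Fintype V] [Fintype E] (ends : E → V × V)
    (N d : ℕ) (hN : 1 ≤ N) (hG : EdgeConnected ends N)
    (hV : Fintype.card V ≤ N ^ (2 * d)) (ε : ℝ≥0∞)
    (μ : Measure (E → Bool)) (hμ : IsBernoulli (ε / (4 * d)) μ) (X : Set E) :
    μ {c | max 1 ((K ends X : ℝ) / Real.sqrt N) < (K ends (X ∪ toSet c) : ℝ)}
      ≤ ENNReal.ofReal (Real.sqrt N * (N : ℝ) ^ (2 * (d : ℝ) * Real.sqrt N))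
          * (1 - ε / (4 * d)) ^ N := by
  have hsqrtN : 0 < Real.sqrt N := Real.sqrt_pos.2 (by exact_mod_cast hN)
  set F := smallFamilies ends X ⌊Real.sqrt N⌋₊ N
  calc μ {c | max 1 ((K ends X : ℝ) / Real.sqrt N) < (K ends (X ∪ toSet c) : ℝ)}
      ≤ ∑ T ∈ F, μ {c | ∀ e ∈ cut ends (⋃₀ (T : Set (Set V))), c e = false} :=
        (measure_mono (setOf_max_lt_K_subset hG hsqrtN X)).trans (measure_biUnion_finset_le _ _)
    _ ≤ ∑ _T ∈ F, (1 - ε / (4 * d)) ^ N :=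
        Finset.sum_le_sum fun T hT => hμ.measure_forall_eq_false_le (Finset.mem_filter.1 hT).2
    _ = F.card * (1 - ε / (4 * d)) ^ N := by rw [Finset.sum_const, nsmul_eq_mul]
    _ ≤ _ := by
        gcongr
        rw [← ENNReal.ofReal_natCast]
        exact ENNReal.ofReal_le_ofReal (card_smallFamilies_sqrt_le ends hN hV X)

/-- an `(ε/4d)`-percolation on an `N`-edge-connected multigraph with at most
`N^{2d}` vertices shrinks the number of components below `max(1, K(X)/√N)` except with
probability at most `√N · N^{2d√N} · (1 - ε/4d)^N`. -/
theorem stmt3 {V E : Type*} [Fintype V] [Fintype E] (ends : E → V × V)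
    (N d : ℕ) (hN : 1 ≤ N) (hd : 1 ≤ d) (hG : EdgeConnected ends N)
    (hV : Fintype.card V ≤ N ^ (2 * d)) (ε : ℝ≥0∞) (hε0 : 0 < ε) (hε1 : ε < 1)
    (μ : Measure (E → Bool)) (hμ : IsBernoulli (ε / (4 * d)) μ) (X : Set E) :
    μ {c | max 1 ((K ends X : ℝ) / Real.sqrt N) < (K ends (X ∪ toSet c) : ℝ)}
      ≤ ENNReal.ofReal (Real.sqrt N * (N : ℝ) ^ (2 * (d : ℝ) * Real.sqrt N))
          * (1 - ε / (4 * d)) ^ N :=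
  stmt3_general ends N d hN hG hV ε μ hμ X

end Perco
end

section
/- There exist constants C₁, C₂ > 0 depending only on d and ε such that: for every integer N ≥ 1 and every N-edge-connected finite multigraph G = (V, E) with |V| ≤ N^{2d}, if ω ⊆ E is an ε-percolation on G, then the probability that the graph (V, ω) is connected is at least 1 − C₂ e^{−C₁ N}. -/
/-!
If `(V, ω)` is disconnected, then some proper nonempty vertex set `S` has all edges of its cut
`∂S` closed, an event of probability `(1 - ε) ^ |∂S|`. All cuts have at least `N + 1` edges, and
Karger's cut-counting bound says that at most `2 (2n) ^ b` vertex sets have a cut of size `k`,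
where `n = |V|` and `b = ⌊2k / (N + 1)⌋ + 1 ≤ 3k / (N + 1)`. As `n ≤ (N + 1) ^ (2d)`, the factor
`(2n) ^ (3 / (N + 1))` tends to `1`, so for any `r` with `1 - ε < r < 1` and `N` large the union
bound over `S` is dominated by the geometric series `∑_{k > N} 2 r ^ k`.
-/

open MeasureTheory Real Set
open scoped ENNReal Classical

namespace Perco

lemma pow_mul_pow_le_pow {a q r : ℝ} {b k l : ℕ} (ha : 1 ≤ a) (hq : 0 ≤ q) (hr : 0 ≤ r)
    (hl : l ≠ 0) (hbk : b * l ≤ 3 * k) (h : a ^ 3 * q ^ l ≤ r ^ l) : a ^ b * q ^ k ≤ r ^ k := by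
  refine (pow_le_pow_iff_left₀ (by positivity) (by positivity) hl).1 ?_
  calc (a ^ b * q ^ k) ^ l = a ^ (b * l) * q ^ (k * l) := by ring
    _ ≤ a ^ (3 * k) * q ^ (k * l) := by gcongr
    _ = (a ^ 3 * q ^ l) ^ k := by ring
    _ ≤ (r ^ l) ^ k := by gcongr
    _ = (r ^ k) ^ l := by ring

-- `X ≤ A * m / (m - T) ≤ A * k / (k - b) = C`, because `T / m ≤ b / k`.
lemma le_of_mul_sub_le_mul {X A C m T k b : ℕ} (hX : X * (m - T) ≤ m * A)
    (hC : A * k = C * (k - b)) (hkT : k * T ≤ m * b) (hT : T < m) (hb : b < k) : X ≤ C := by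
  have hpos : 0 < (m - T) * (k - b) := Nat.mul_pos (by omega) (by omega)
  have hm : m * (k - b) ≤ k * (m - T) := by
    zify [hT.le, hb.le]
    nlinarith
  refine Nat.le_of_mul_le_mul_right ?_ hpos
  calc X * ((m - T) * (k - b)) ≤ m * A * (k - b) := by
        rw [← mul_assoc]; exact Nat.mul_le_mul_right _ hX
    _ = A * (m * (k - b)) := by ring
    _ ≤ A * (k * (m - T)) := Nat.mul_le_mul_left _ hm
    _ = C * ((m - T) * (k - b)) := by rw [← mul_assoc, hC]; ring

lemma eventually_mul_pow_mul_pow_le {q r : ℝ} (hq : 0 ≤ q) (hqr : q < r) (C : ℝ) (k : ℕ) :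
    ∀ᶠ n : ℕ in Filter.atTop, C * n ^ k * q ^ n ≤ r ^ n := by
  have hr : 0 < r := hq.trans_lt hqr
  have hρ : |q / r| < 1 := by
    rw [abs_of_nonneg (by positivity)]
    exact (div_lt_one hr).2 hqr
  have hlim := (tendsto_pow_const_mul_const_pow_of_abs_lt_one k hρ).const_mul C
  rw [mul_zero] at hlim
  filter_upwards [hlim.eventually (ge_mem_nhds one_pos)] with n hn
  calc C * n ^ k * q ^ n = C * (n ^ k * (q / r) ^ n) * r ^ n := by
        rw [div_pow]; field_simp
    _ ≤ 1 * r ^ n := by gcongr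
    _ = r ^ n := one_mul _

lemma one_sub_le_measure_of_measure_compl_le {Ω : Type*} [MeasurableSpace Ω] {μ : Measure Ω}
    [IsProbabilityMeasure μ] {s : Set Ω} {a : ℝ≥0∞} (h : μ sᶜ ≤ a) : 1 - a ≤ μ s := by
  rw [tsub_le_iff_right, ← measure_univ (μ := μ)]
  exact (measure_univ_le_add_compl s).trans (add_le_add_right h _)

lemma measure_forall_eq_false {E : Type*} {ε : ℝ≥0∞} {μ : Measure (E → Bool)}
    (hμ : IsBernoulli ε μ) (F : Finset E) : μ {c | ∀ e ∈ F, c e = false} = (1 - ε) ^ F.card := by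
  simpa using hμ.2 F fun _ => false

lemma le_ofReal_mul_pow_of_eventually {p : ℝ≥0∞} {C r : ℝ} (hC : 0 ≤ C) (hr₀ : 0 < r)
    (hr₁ : r < 1) {N N₀ : ℕ} (hp₁ : p ≤ 1) (hp : N₀ ≤ N → p ≤ ENNReal.ofReal (C * r ^ (N + 1))) :
    p ≤ ENNReal.ofReal ((C * r + r⁻¹ ^ N₀) * r ^ N) := by
  rcases lt_or_ge N N₀ with hN | hN
  · refine hp₁.trans (ENNReal.one_le_ofReal.2 ?_)
    calc 1 = r⁻¹ ^ N₀ * r ^ N₀ := by rw [inv_pow, inv_mul_cancel₀ (pow_ne_zero _ hr₀.ne')]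
      _ ≤ r⁻¹ ^ N₀ * r ^ N :=
          mul_le_mul_of_nonneg_left (pow_le_pow_of_le_one hr₀.le hr₁.le hN.le) (by positivity)
      _ ≤ (C * r + r⁻¹ ^ N₀) * r ^ N := by gcongr; exact le_add_of_nonneg_left (by positivity)
  · refine (hp hN).trans (ENNReal.ofReal_le_ofReal ?_)
    rw [pow_succ, mul_comm (r ^ N), ← mul_assoc]
    gcongr
    exact le_add_of_nonneg_right (by positivity)

section Partition

variable {V : Type*} {P : Finset (Set V)} {B B₁ B₂ S : Set V} {u v : V}

/-- Choice-free: for a partition `P` this is the block containing `v`. -/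
def blockOf (P : Finset (Set V)) (v : V) : Set V := {w | ∃ B ∈ P, v ∈ B ∧ w ∈ B}

def IsUnionOfBlocks (P : Finset (Set V)) (S : Set V) : Prop := ∀ B ∈ P, B ⊆ S ∨ Disjoint B S

noncomputable def merge (P : Finset (Set V)) (B₁ B₂ : Set V) : Finset (Set V) :=
  insert (B₁ ∪ B₂) ((P.erase B₁).erase B₂)

lemma blockOf_eq (hP : Setoid.IsPartition (P : Set (Set V))) (hB : B ∈ P) (hv : v ∈ B) :
    blockOf P v = B := by
  ext w
  constructor
  · rintro ⟨B', hB', hvB', hwB'⟩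
    rwa [(hP.2 v).unique ⟨hB', hvB'⟩ ⟨hB, hv⟩] at hwB'
  · exact fun hw => ⟨B, hB, hv, hw⟩

lemma blockOf_mem (hP : Setoid.IsPartition (P : Set (Set V))) (v : V) :
    blockOf P v ∈ P ∧ v ∈ blockOf P v := by
  obtain ⟨B, ⟨hB, hv⟩, -⟩ := hP.2 v
  rw [blockOf_eq hP hB hv]
  exact ⟨hB, hv⟩

lemma IsUnionOfBlocks.subset_iff_mem (hS : IsUnionOfBlocks P S) (hB : B ∈ P) (hv : v ∈ B) :
    B ⊆ S ↔ v ∈ S := by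
  refine ⟨fun h => h hv, fun h => ?_⟩
  exact (hS B hB).resolve_right fun hd => hd.notMem_of_mem_left hv h

lemma isPartition_merge (hP : Setoid.IsPartition (P : Set (Set V))) (h₁ : B₁ ∈ P) (h₂ : B₂ ∈ P) :
    Setoid.IsPartition (merge P B₁ B₂ : Set (Set V)) := by
  have hdisj := hP.pairwiseDisjoint
  simp only [merge, Finset.coe_insert, Finset.coe_erase] at hdisj ⊢
  refine Set.PairwiseDisjoint.isPartition_of_exists_of_ne_empty ?_ ?_ ?_
  · refine (hdisj.subset (Set.sdiff_subset.trans Set.sdiff_subset)).insert fun B hB hne => ?_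
    obtain ⟨⟨hBP, hB₁⟩, hB₂⟩ := hB
    exact Set.disjoint_union_left.2 ⟨hdisj h₁ hBP (Ne.symm hB₁), hdisj h₂ hBP (Ne.symm hB₂)⟩
  · intro w
    obtain ⟨B, ⟨hB, hw⟩, -⟩ := hP.2 w
    by_cases hB₁ : B = B₁
    · exact ⟨_, Set.mem_insert _ _, Or.inl (hB₁ ▸ hw)⟩
    by_cases hB₂ : B = B₂
    · exact ⟨_, Set.mem_insert _ _, Or.inr (hB₂ ▸ hw)⟩
    exact ⟨B, Set.mem_insert_of_mem _ ⟨⟨hB, hB₁⟩, hB₂⟩, hw⟩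
  · rintro (h | ⟨⟨h, -⟩, -⟩)
    · exact hP.1 ((Set.union_empty_iff.1 h.symm).1 ▸ h₁)
    · exact hP.1 h

lemma card_merge (hP : Setoid.IsPartition (P : Set (Set V))) (h₁ : B₁ ∈ P) (h₂ : B₂ ∈ P)
    (hne : B₁ ≠ B₂) : (merge P B₁ B₂).card = P.card - 1 := by
  have hnotMem : B₁ ∪ B₂ ∉ (P.erase B₁).erase B₂ := by
    intro h
    obtain ⟨hne₁, hB⟩ := Finset.mem_erase.1 (Finset.mem_of_mem_erase h)
    obtain ⟨w, hw⟩ := Setoid.nonempty_of_mem_partition hP h₁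
    exact Set.disjoint_left.1 (hP.pairwiseDisjoint hB h₁ hne₁) (Or.inl hw) hw
  have h2 : 2 ≤ P.card := Finset.one_lt_card.2 ⟨B₁, h₁, B₂, h₂, hne⟩
  rw [merge, Finset.card_insert_of_notMem hnotMem,
    Finset.card_erase_of_mem (Finset.mem_erase.2 ⟨hne.symm, h₂⟩), Finset.card_erase_of_mem h₁]
  omega

lemma isUnionOfBlocks_merge_iff (h₁ : B₁ ∈ P) (h₂ : B₂ ∈ P) (hu : u ∈ B₁) (hv : v ∈ B₂) :
    IsUnionOfBlocks (merge P B₁ B₂) S ↔ IsUnionOfBlocks P S ∧ (u ∈ S ↔ v ∈ S) := by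
  constructor
  · intro hS
    have hS₁₂ := hS _ (Finset.mem_insert_self _ _)
    refine ⟨fun B hB => ?_, ?_⟩
    · by_cases hB₁ : B = B₁
      · subst hB₁
        exact hS₁₂.imp Set.subset_union_left.trans fun h => (Set.disjoint_union_left.1 h).1
      by_cases hB₂ : B = B₂
      · subst hB₂
        exact hS₁₂.imp Set.subset_union_right.trans fun h => (Set.disjoint_union_left.1 h).2
      exact hS B (Finset.mem_insert_of_mem (Finset.mem_erase.2 ⟨hB₂, Finset.mem_erase.2 ⟨hB₁, hB⟩⟩))
    · rcases hS₁₂ with h | h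
      · exact iff_of_true (h (Or.inl hu)) (h (Or.inr hv))
      · exact iff_of_false (Set.disjoint_left.1 h (Or.inl hu)) (Set.disjoint_left.1 h (Or.inr hv))
  · rintro ⟨hS, huv⟩ B hB
    rcases Finset.mem_insert.1 hB with rfl | hB
    · by_cases huS : u ∈ S
      · exact Or.inl (Set.union_subset ((hS.subset_iff_mem h₁ hu).2 huS)
          ((hS.subset_iff_mem h₂ hv).2 (huv.1 huS)))
      · refine Or.inr (Set.disjoint_union_left.2 ⟨?_, ?_⟩)
        · exact (hS B₁ h₁).resolve_left fun h => huS (h hu)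
        · exact (hS B₂ h₂).resolve_left fun h => huS (huv.2 (h hv))
    · exact hS B (Finset.mem_of_mem_erase (Finset.mem_of_mem_erase hB))

end Partition

section Cuts

variable {V E : Type*} {ends : E → V × V} {P : Finset (Set V)} {S : Set V} {e : E} {l T b : ℕ}

lemma notMem_cut_iff : e ∉ cut ends S ↔ ((ends e).1 ∈ S ↔ (ends e).2 ∈ S) := by
  simp only [cut, Set.mem_ofPred_eq]
  tauto

lemma mem_of_reach {X : Set E} (hX : ∀ e ∈ X, e ∉ cut ends S) {a w : V}
    (h : Reach ends X a w) (ha : a ∈ S) : w ∈ S := by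
  induction h with
  | refl => exact ha
  | tail _ hstep ih =>
    obtain ⟨e, he, hends | hends⟩ := hstep
    · exact (hends ▸ notMem_cut_iff.1 (hX e he)).1 ih
    · exact (hends ▸ notMem_cut_iff.1 (hX e he)).2 ih

variable [Fintype E]

variable (ends) in
noncomputable def cutFinset (S : Set V) : Finset E := {e | e ∈ cut ends S}

variable (ends) in
noncomputable def crossingEdges (P : Finset (Set V)) : Finset E :=
  {e | blockOf P (ends e).1 ≠ blockOf P (ends e).2}

@[simp]
lemma mem_cutFinset : e ∈ cutFinset ends S ↔ e ∈ cut ends S := by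
  simp [cutFinset]

lemma cutFinset_subset_crossingEdges (hP : Setoid.IsPartition (P : Set (Set V)))
    (hS : IsUnionOfBlocks P S) : cutFinset ends S ⊆ crossingEdges ends P := by
  intro e he
  simp only [crossingEdges, Finset.mem_filter, Finset.mem_univ, true_and]
  intro hsame
  obtain ⟨hB, hu⟩ := blockOf_mem hP (ends e).1
  have hv : (ends e).2 ∈ blockOf P (ends e).1 := hsame ▸ (blockOf_mem hP (ends e).2).2
  exact notMem_cut_iff.2 ((hS.subset_iff_mem hB hu).symm.trans (hS.subset_iff_mem hB hv))
    (mem_cutFinset.1 he)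

variable [Fintype V]

variable (V) in
noncomputable def properSets : Finset (Set V) := {S | S.Nonempty ∧ S ≠ Set.univ}

variable (ends) in
noncomputable def smallCuts (P : Finset (Set V)) (T : ℕ) : Finset (Set V) :=
  {S ∈ properSets V | IsUnionOfBlocks P S ∧ (cutFinset ends S).card ≤ T}

lemma smallCuts_merge (hP : Setoid.IsPartition (P : Set (Set V))) (e : E) (T : ℕ) :
    smallCuts ends (merge P (blockOf P (ends e).1) (blockOf P (ends e).2)) T =
      {S ∈ smallCuts ends P T | e ∉ cutFinset ends S} := by
  obtain ⟨h₁, hu⟩ := blockOf_mem hP (ends e).1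
  obtain ⟨h₂, hv⟩ := blockOf_mem hP (ends e).2
  ext S
  simp only [smallCuts, Finset.mem_filter, isUnionOfBlocks_merge_iff h₁ h₂ hu hv,
    mem_cutFinset, notMem_cut_iff]
  tauto

lemma card_smallCuts_le_two_pow (hP : Setoid.IsPartition (P : Set (Set V))) (T : ℕ) :
    (smallCuts ends P T).card ≤ 2 ^ P.card := by
  rw [← Finset.card_powerset]
  refine Finset.card_le_card_of_injOn (fun S => {B ∈ P | B ⊆ S})
    (fun S _ => Finset.mem_powerset.2 (Finset.filter_subset _ _)) ?_
  intro S₁ hS₁ S₂ hS₂ heq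
  have hS₁ := (Finset.mem_filter.1 hS₁).2.1
  have hS₂ := (Finset.mem_filter.1 hS₂).2.1
  ext v
  obtain ⟨hB, hv⟩ := blockOf_mem hP v
  have := congrArg (blockOf P v ∈ ·) heq
  simp only [Finset.mem_filter, hB, true_and, eq_iff_iff] at this
  rw [← hS₁.subset_iff_mem hB hv, ← hS₂.subset_iff_mem hB hv, this]

lemma card_mul_le_card_crossingEdges_mul_two (hP : Setoid.IsPartition (P : Set (Set V)))
    (hP₂ : 2 ≤ P.card) (hmin : ∀ S ∈ properSets V, l ≤ (cutFinset ends S).card) :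
    P.card * l ≤ (crossingEdges ends P).card * 2 := by
  refine Finset.card_mul_le_card_mul (fun B e => e ∈ cutFinset ends B) (fun B hB => ?_)
    (fun e _ => ?_)
  · rw [Finset.bipartiteAbove, Finset.filter_mem_eq_inter, Finset.inter_eq_right.2
      (cutFinset_subset_crossingEdges hP fun B' hB' => ?_)]
    · refine hmin B ?_
      obtain ⟨B', hB', hne⟩ := Finset.exists_mem_ne hP₂ B
      obtain ⟨w, hw⟩ := Setoid.nonempty_of_mem_partition hP hB'
      simp only [properSets, Finset.mem_filter, Finset.mem_univ, true_and]
      exact ⟨Setoid.nonempty_of_mem_partition hP hB, fun h =>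
        Set.disjoint_left.1 (hP.pairwiseDisjoint hB' hB hne) hw (h ▸ Set.mem_univ w)⟩
    · by_cases h : B' = B
      · exact Or.inl h.le
      · exact Or.inr (hP.pairwiseDisjoint hB' hB h)
  · refine (Finset.card_le_card (t := {blockOf P (ends e).1, blockOf P (ends e).2})
      fun B hB => ?_).trans Finset.card_le_two
    obtain ⟨hB, he⟩ := Finset.mem_filter.1 hB
    rcases mem_cutFinset.1 he with ⟨hu, -⟩ | ⟨-, hv⟩
    · exact Finset.mem_insert.2 (Or.inl (blockOf_eq hP hB hu).symm)
    · exact Finset.mem_insert_of_mem (Finset.mem_singleton.2 (blockOf_eq hP hB hv).symm)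

lemma card_smallCuts_mul_le (hP : Setoid.IsPartition (P : Set (Set V))) {A : ℕ}
    (hA : ∀ e ∈ crossingEdges ends P,
      (smallCuts ends (merge P (blockOf P (ends e).1) (blockOf P (ends e).2)) T).card ≤ A) :
    (smallCuts ends P T).card * ((crossingEdges ends P).card - T) ≤
      (crossingEdges ends P).card * A := by
  refine Finset.card_mul_le_card_mul (fun S e => e ∉ cutFinset ends S) (fun S hS => ?_)
    (fun e he => by rw [Finset.bipartiteBelow, ← smallCuts_merge hP e T]; exact hA e he)
  obtain ⟨-, hS, hST⟩ := Finset.mem_filter.1 hS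
  rw [Finset.bipartiteAbove, Finset.filter_not, Finset.filter_mem_eq_inter,
    Finset.inter_eq_right.2 (cutFinset_subset_crossingEdges hP hS),
    Finset.card_sdiff_of_subset (cutFinset_subset_crossingEdges hP hS)]
  omega

/-- Karger's cut-counting bound, with his random contraction replaced by a double count: a small
cut avoids all but `T` of the at least `#P * l / 2` crossing edges, so contracting one crossing
edge keeps, on average, a fraction at least `1 - b / #P` of the small cuts. -/
lemma card_smallCuts_le_choose (hl : 1 ≤ l) (hT : 2 * T ≤ b * l)
    (hmin : ∀ S ∈ properSets V, l ≤ (cutFinset ends S).card)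
    (hP : Setoid.IsPartition (P : Set (Set V))) (hPb : b + 1 ≤ P.card) :
    (smallCuts ends P T).card ≤ 2 ^ (b + 1) * P.card.choose b := by
  obtain ⟨n, hn⟩ := Nat.exists_eq_add_of_le hPb
  induction n generalizing P with
  | zero =>
    calc (smallCuts ends P T).card ≤ 2 ^ P.card := card_smallCuts_le_two_pow hP T
      _ = 2 ^ (b + 1) * 1 := by rw [hn, mul_one]
      _ ≤ 2 ^ (b + 1) * P.card.choose b := by
        gcongr; exact Nat.choose_pos (by omega)
  | succ n ih =>
    set m := (crossingEdges ends P).card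
    have hPm : P.card * l ≤ m * 2 := card_mul_le_card_crossingEdges_mul_two hP (by omega) hmin
    have hmerge : ∀ e ∈ crossingEdges ends P,
        (smallCuts ends (merge P (blockOf P (ends e).1) (blockOf P (ends e).2)) T).card ≤
          2 ^ (b + 1) * (b + 1 + n).choose b := by
      intro e he
      obtain ⟨h₁, -⟩ := blockOf_mem hP (ends e).1
      obtain ⟨h₂, -⟩ := blockOf_mem hP (ends e).2
      have hcard : (merge P (blockOf P (ends e).1) (blockOf P (ends e).2)).card = b + 1 + n := by
        rw [card_merge hP h₁ h₂ (Finset.mem_filter.1 he).2]; omega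
      exact hcard ▸ ih (isPartition_merge hP h₁ h₂) (by omega) hcard
    refine le_of_mul_sub_le_mul (k := P.card) (b := b) (card_smallCuts_mul_le hP hmerge) ?_ ?_ ?_
      (by omega)
    · rw [hn, ← add_assoc, mul_assoc, Nat.choose_mul_succ_eq, mul_assoc]
    · nlinarith
    · nlinarith

lemma isPartition_image_singleton :
    Setoid.IsPartition ((Finset.univ.image fun v : V => ({v} : Set V)) : Set (Set V)) := by
  simp only [Finset.coe_image, Finset.coe_univ, Set.image_univ]
  refine ⟨fun ⟨v, h⟩ => Set.singleton_ne_empty v h, fun v => ⟨{v}, ⟨⟨v, rfl⟩, rfl⟩, ?_⟩⟩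
  rintro B ⟨⟨w, rfl⟩, hv⟩
  exact (Set.mem_singleton_iff.1 hv) ▸ rfl

lemma card_filter_card_cutFinset_le (hl : 1 ≤ l) (hT : 2 * T ≤ b * l)
    (hmin : ∀ S ∈ properSets V, l ≤ (cutFinset ends S).card) {M : ℕ}
    (hV : Fintype.card V ≤ M) (hM : 1 ≤ M) :
    {S ∈ properSets V | (cutFinset ends S).card ≤ T}.card ≤ 2 ^ (b + 1) * M ^ b := by
  set P := Finset.univ.image fun v : V => ({v} : Set V)
  have hP : Setoid.IsPartition (P : Set (Set V)) := isPartition_image_singleton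
  have hPcard : P.card = Fintype.card V :=
    Finset.card_image_of_injective _ Set.singleton_injective
  have hsmall : {S ∈ properSets V | (cutFinset ends S).card ≤ T} = smallCuts ends P T := by
    refine Finset.filter_congr fun S _ => (and_iff_right fun B hB => ?_).symm
    obtain ⟨v, -, rfl⟩ := Finset.mem_image.1 hB
    by_cases hv : v ∈ S
    · exact Or.inl (Set.singleton_subset_iff.2 hv)
    · exact Or.inr (Set.disjoint_singleton_left.2 hv)
  rw [hsmall]
  rcases le_or_gt (b + 1) P.card with hPb | hPb
  · calc (smallCuts ends P T).card ≤ 2 ^ (b + 1) * P.card.choose b :=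
          card_smallCuts_le_choose hl hT hmin hP hPb
      _ ≤ 2 ^ (b + 1) * M ^ b := by
          gcongr
          exact (Nat.choose_le_pow _ _).trans (Nat.pow_le_pow_left (hPcard ▸ hV) b)
  · calc (smallCuts ends P T).card ≤ 2 ^ P.card := card_smallCuts_le_two_pow hP T
      _ ≤ 2 ^ (b + 1) * 1 := by rw [mul_one]; exact Nat.pow_le_pow_right two_pos hPb.le
      _ ≤ 2 ^ (b + 1) * M ^ b := by gcongr; exact Nat.one_le_pow _ _ hM

lemma card_filter_card_cutFinset_eq_mul_pow_le (hl : 1 ≤ l)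
    (hmin : ∀ S ∈ properSets V, l ≤ (cutFinset ends S).card) {M : ℕ}
    (hV : Fintype.card V ≤ M) (hM : 1 ≤ M) {q r : ℝ} (hq : 0 ≤ q) (hr : 0 ≤ r)
    (hqr : (2 * M : ℝ) ^ 3 * q ^ l ≤ r ^ l) {k : ℕ} (hk : l ≤ k) :
    ({S ∈ properSets V | (cutFinset ends S).card = k}.card : ℝ) * q ^ k ≤ 2 * r ^ k := by
  set b := 2 * k / l + 1
  have h2k : 2 * k ≤ b * l := by
    rw [add_mul, one_mul]; exact (Nat.lt_div_mul_add hl).le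
  have hbk : b * l ≤ 3 * k := by
    have := Nat.div_mul_le_self (2 * k) l
    rw [add_mul, one_mul]; omega
  have hcount : {S ∈ properSets V | (cutFinset ends S).card = k}.card ≤ 2 ^ (b + 1) * M ^ b :=
    (Finset.card_le_card (Finset.monotone_filter_right _ fun _ _ h => h.le)).trans
      (card_filter_card_cutFinset_le hl h2k hmin hV hM)
  calc ({S ∈ properSets V | (cutFinset ends S).card = k}.card : ℝ) * q ^ k
      ≤ ((2 ^ (b + 1) * M ^ b : ℕ) : ℝ) * q ^ k := by gcongr
    _ = 2 * ((2 * M : ℝ) ^ b * q ^ k) := by push_cast; ring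
    _ ≤ 2 * r ^ k := by
      gcongr
      exact pow_mul_pow_le_pow (by norm_cast; omega) hq hr (by omega) hbk hqr

lemma sum_pow_card_cutFinset_le (hl : 1 ≤ l)
    (hmin : ∀ S ∈ properSets V, l ≤ (cutFinset ends S).card) {M : ℕ}
    (hV : Fintype.card V ≤ M) (hM : 1 ≤ M) {q r : ℝ} (hq : 0 ≤ q) (hr₀ : 0 ≤ r) (hr₁ : r < 1)
    (hqr : (2 * M : ℝ) ^ 3 * q ^ l ≤ r ^ l) :
    ∑ S ∈ properSets V, q ^ (cutFinset ends S).card ≤ 2 / (1 - r) * r ^ l := by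
  have hmaps : ∀ S ∈ properSets V, (cutFinset ends S).card ∈ Finset.Ico l (Fintype.card E + 1) :=
    fun S hS => Finset.mem_Ico.2 ⟨hmin S hS, Nat.lt_succ_of_le (Finset.card_le_univ _)⟩
  rw [← Finset.sum_fiberwise_of_maps_to' hmaps (fun k => q ^ k)]
  calc ∑ k ∈ Finset.Ico l (Fintype.card E + 1),
        ∑ S ∈ properSets V with (cutFinset ends S).card = k, q ^ k
      ≤ ∑ k ∈ Finset.Ico l (Fintype.card E + 1), 2 * r ^ k := by
        refine Finset.sum_le_sum fun k hk => ?_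
        rw [Finset.sum_const, nsmul_eq_mul]
        exact card_filter_card_cutFinset_eq_mul_pow_le hl hmin hV hM hq hr₀ hqr
          (Finset.mem_Ico.1 hk).1
    _ = 2 * ∑ k ∈ Finset.Ico l (Fintype.card E + 1), r ^ k := (Finset.mul_sum ..).symm
    _ ≤ 2 * (r ^ l / (1 - r)) := by gcongr; exact geom_sum_Ico_le_of_lt_one hr₀ hr₁
    _ = 2 / (1 - r) * r ^ l := by ring

lemma EdgeConnected.le_card_cutFinset {N : ℕ} (h : EdgeConnected ends N) (hS : S ∈ properSets V) :
    N + 1 ≤ (cutFinset ends S).card := by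
  obtain ⟨⟨a, ha⟩, hS⟩ := (Finset.mem_filter.1 hS).2
  obtain ⟨w, hw⟩ := (Set.ne_univ_iff_exists_notMem S).1 hS
  by_contra! hlt
  have hreach := h.2 (cutFinset ends S) (by omega) a w
  refine hw (mem_of_reach (fun e he hcut => ?_) hreach ha)
  exact he (mem_cutFinset.2 hcut)

lemma exists_cut_closed_of_not_connected {c : E → Bool} (h : ¬Connected ends (toSet c)) :
    ∃ S ∈ properSets V, ∀ e ∈ cutFinset ends S, c e = false := by
  simp only [Connected, not_forall] at h
  obtain ⟨a, w, haw⟩ := h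
  refine ⟨{v | Reach ends (toSet c) a v}, ?_, fun e he => ?_⟩
  · simp only [properSets, Finset.mem_filter, Finset.mem_univ, true_and]
    exact ⟨⟨a, Relation.ReflTransGen.refl⟩, fun h => haw (Set.eq_univ_iff_forall.1 h w)⟩
  · by_contra hce
    rw [Bool.not_eq_false] at hce
    exact notMem_cut_iff.2 ⟨fun hu => hu.tail ⟨e, hce, Or.inl rfl⟩,
      fun hv => hv.tail ⟨e, hce, Or.inr rfl⟩⟩ (mem_cutFinset.1 he)

variable {ε : ℝ≥0∞} {μ : Measure (E → Bool)}

lemma measure_compl_connected_le_sum (hμ : IsBernoulli ε μ) :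
    μ {c | Connected ends (toSet c)}ᶜ ≤ ∑ S ∈ properSets V, (1 - ε) ^ (cutFinset ends S).card :=
  calc μ {c | Connected ends (toSet c)}ᶜ
      ≤ μ (⋃ S ∈ properSets V, {c | ∀ e ∈ cutFinset ends S, c e = false}) :=
        measure_mono fun _ hc =>
          let ⟨_, hS, hclosed⟩ := exists_cut_closed_of_not_connected hc
          Set.mem_biUnion hS hclosed
    _ ≤ ∑ S ∈ properSets V, μ {c | ∀ e ∈ cutFinset ends S, c e = false} :=
        measure_biUnion_finset_le _ _
    _ = ∑ S ∈ properSets V, (1 - ε) ^ (cutFinset ends S).card :=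
        Finset.sum_congr rfl fun _ _ => measure_forall_eq_false hμ _

lemma measure_compl_connected_le {N M : ℕ} (hconn : EdgeConnected ends N)
    (hV : Fintype.card V ≤ M) (hM : 1 ≤ M) (hμ : IsBernoulli ε μ) {r : ℝ} (hr₀ : 0 ≤ r)
    (hr₁ : r < 1) (hqr : (2 * M : ℝ) ^ 3 * (1 - ε).toReal ^ (N + 1) ≤ r ^ (N + 1)) :
    μ {c | Connected ends (toSet c)}ᶜ ≤ ENNReal.ofReal (2 / (1 - r) * r ^ (N + 1)) :=
  calc μ {c | Connected ends (toSet c)}ᶜ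
      ≤ ∑ S ∈ properSets V, (1 - ε) ^ (cutFinset ends S).card :=
        measure_compl_connected_le_sum hμ
    _ = ENNReal.ofReal (∑ S ∈ properSets V, (1 - ε).toReal ^ (cutFinset ends S).card) := by
        rw [ENNReal.ofReal_sum_of_nonneg fun _ _ => by positivity]
        refine Finset.sum_congr rfl fun S _ => ?_
        rw [ENNReal.ofReal_pow ENNReal.toReal_nonneg,
          ENNReal.ofReal_toReal (ENNReal.sub_ne_top ENNReal.one_ne_top)]
    _ ≤ ENNReal.ofReal (2 / (1 - r) * r ^ (N + 1)) :=
        ENNReal.ofReal_le_ofReal <| sum_pow_card_cutFinset_le (by omega)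
          (fun _ hS => hconn.le_card_cutFinset hS) hV hM ENNReal.toReal_nonneg hr₀ hr₁ hqr

end Cuts

theorem stmt4_general (d : ℕ) (ε : ℝ≥0∞) (hε0 : 0 < ε) :
    ∃ C₁ C₂ : ℝ, 0 < C₁ ∧ 0 < C₂ ∧
      ∀ (N : ℕ), 1 ≤ N → ∀ (V E : Type) (_ : Fintype V) (_ : Fintype E)
        (ends : E → V × V), EdgeConnected ends N → Fintype.card V ≤ N ^ (2 * d) →
        ∀ μ : Measure (E → Bool), IsBernoulli ε μ →
          1 - ENNReal.ofReal (C₂ * Real.exp (-C₁ * N))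
            ≤ μ {c | Connected ends (toSet c)} := by
  set q := (1 - ε).toReal
  have hq₀ : 0 ≤ q := ENNReal.toReal_nonneg
  have hq₁ : q < 1 := ENNReal.toReal_lt_of_lt_ofReal <| by
    simpa using ENNReal.sub_lt_self ENNReal.one_ne_top one_ne_zero hε0.ne'
  set r := (1 + q) / 2 with hr
  have hr₀ : 0 < r := by positivity
  have hr₁ : r < 1 := by linarith
  obtain ⟨N₀, hN₀⟩ := Filter.eventually_atTop.1
    (eventually_mul_pow_mul_pow_le hq₀ (show q < r by linarith) 8 (6 * d))
  have hC : 0 ≤ 2 / (1 - r) := div_nonneg zero_le_two (sub_pos.2 hr₁).le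
  refine ⟨-log r, 2 / (1 - r) * r + r⁻¹ ^ N₀, neg_pos.2 (log_neg hr₀ hr₁), by positivity, ?_⟩
  intro N _ V E _ _ ends hconn hcard μ hμ
  have := hμ.1
  rw [show -(-log r) * N = N * log r by ring, exp_nat_mul, exp_log hr₀]
  refine one_sub_le_measure_of_measure_compl_le <|
    le_ofReal_mul_pow_of_eventually hC hr₀ hr₁ prob_le_one fun hN => ?_
  refine measure_compl_connected_le hconn (hcard.trans (Nat.pow_le_pow_left N.le_succ _))
    (Nat.one_le_pow _ _ N.succ_pos) hμ hr₀.le hr₁ ?_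
  convert hN₀ (N + 1) (by omega) using 2
  push_cast
  ring

/-- an `ε`-percolation on any `N`-edge-connected multigraph with at most
`N^{2d}` vertices is connected with probability at least `1 - C₂ e^{-C₁ N}`. -/
theorem stmt4 (d : ℕ) (hd : 1 ≤ d) (ε : ℝ≥0∞) (hε0 : 0 < ε) (hε1 : ε < 1) :
    ∃ C₁ C₂ : ℝ, 0 < C₁ ∧ 0 < C₂ ∧
      ∀ (N : ℕ), 1 ≤ N → ∀ (V E : Type) (_ : Fintype V) (_ : Fintype E)
        (ends : E → V × V), EdgeConnected ends N → Fintype.card V ≤ N ^ (2 * d) →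
        ∀ μ : Measure (E → Bool), IsBernoulli ε μ →
          1 - ENNReal.ofReal (C₂ * Real.exp (-C₁ * N))
            ≤ μ {c | Connected ends (toSet c)} :=
  stmt4_general d ε hε0

end Perco
end

section
/- Let X be an everywhere percolating subgraph of Z^d and suppose the annulus A_{m, m+√n} = Λ_{m+√n} \ Λ_m contains no connected component of X restricted to Λ_{8dn} that avoids Λ_m, i.e., U_{m, m+√n}(X) = 0. Then any nonempty proper union S of the clusters (components of X in Λ_{8dn}) meeting Λ_{m+√n}, when restricted to Λ_{m+√n}, has edge boundary inside Λ_{m+√n} of size at least √n. -/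
/-!
Both a cluster `C` of the union and a cluster `C'` outside it meet `Λ_m`. Since every vertex lies
in an infinite cluster of `X`, a path of `X` from `C ∩ Λ_m` to infinity first hits the
`ℓ^∞`-sphere of radius `r` while still inside `Λ_{8dn}`, so for every integer `r` with
`m ≤ r ≤ m + √n` both `C` and `C'` meet that sphere. For `d ≥ 2` these spheres are connected in the
lattice, so each of them carries an edge of the boundary of the union; edges on different spheres
are distinct, which gives more than `√n` boundary edges.
-/

open MeasureTheory Real Set
open scoped ENNReal Classical

theorem Relation.ReflTransGen.exists_boundary {α : Type*} {R : α → α → Prop} {T : Set α}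
    {a b : α} (h : Relation.ReflTransGen R a b) (ha : a ∈ T) (hb : b ∉ T) :
    ∃ u v, R u v ∧ u ∈ T ∧ v ∉ T := by
  induction h with
  | refl => exact absurd ha hb
  | @tail v w _ hvw ih =>
    by_cases hv : v ∈ T
    · exact ⟨v, w, hvw, hv, hb⟩
    · exact ih hv

theorem Relation.ReflTransGen.exists_eq_level {α : Type*} {R : α → α → Prop} (f : α → ℕ)
    (hf : ∀ u v, R u v → f v ≤ f u + 1) {a b : α} (h : Relation.ReflTransGen R a b) {r : ℕ}
    (ha : f a ≤ r) (hb : r ≤ f b) :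
    ∃ c, f c = r ∧ Relation.ReflTransGen (fun u v => R u v ∧ f u ≤ r ∧ f v ≤ r) a c := by
  induction h using Relation.ReflTransGen.head_induction_on with
  | refl => exact ⟨b, le_antisymm ha hb, .refl⟩
  | @head u v huv _ ih =>
    by_cases hu : f u = r
    · exact ⟨u, hu, .refl⟩
    · have hv : f v ≤ r := by have := hf u v huv; omega
      obtain ⟨c, hc, hvc⟩ := ih hv
      exact ⟨c, hc, hvc.head ⟨huv, ha, hv⟩⟩

theorem Set.add_one_sub_le_ncard_of_Icc_subset_image {α : Type*} {s : Set α} (hs : s.Finite)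
    {f : α → ℕ} {a b : ℕ} (h : Set.Icc a b ⊆ f '' s) : b + 1 - a ≤ s.ncard :=
  Set.ncard_Icc_nat a b ▸ (Set.ncard_le_ncard h (hs.image f)).trans (Set.ncard_image_le hs)

namespace Perco

def supNorm {d : ℕ} (x : Vtx d) : ℕ := Finset.univ.sup fun i => (x i).natAbs

section SupNorm

variable {d : ℕ}

theorem natAbs_le_supNorm (x : Vtx d) (i : Fin d) : (x i).natAbs ≤ supNorm x :=
  Finset.le_sup (f := fun i => (x i).natAbs) (Finset.mem_univ i)

theorem supNorm_le_iff {x : Vtx d} {k : ℕ} : supNorm x ≤ k ↔ ∀ i, (x i).natAbs ≤ k := by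
  simp [supNorm]

theorem exists_natAbs_eq_supNorm (hd : d ≠ 0) (x : Vtx d) : ∃ i, (x i).natAbs = supNorm x := by
  have : Nonempty (Fin d) := ⟨⟨0, Nat.pos_of_ne_zero hd⟩⟩
  obtain ⟨i, -, hi⟩ :=
    Finset.exists_mem_eq_sup Finset.univ Finset.univ_nonempty fun i => (x i).natAbs
  exact ⟨i, hi.symm⟩

theorem supNorm_eq_of_natAbs_eq {x : Vtx d} {r : ℕ} (hle : ∀ i, (x i).natAbs ≤ r) {i : Fin d}
    (hi : (x i).natAbs = r) : supNorm x = r :=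
  le_antisymm (supNorm_le_iff.2 hle) (hi ▸ natAbs_le_supNorm x i)

theorem finite_setOf_supNorm_le (k : ℕ) : {x : Vtx d | supNorm x ≤ k}.Finite := by
  refine (Set.Finite.pi' fun _ => Set.finite_Icc (-(k : ℤ)) k).subset fun x hx i => ?_
  have := supNorm_le_iff.1 hx i
  exact ⟨by omega, by omega⟩

theorem mem_box_of_supNorm_le {x : Vtx d} {R : ℝ} (h : (supNorm x : ℝ) ≤ R) : x ∈ box d R :=
  fun i => by
    have : ((x i).natAbs : ℝ) ≤ supNorm x := by exact_mod_cast natAbs_le_supNorm x i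
    simpa using this.trans h

theorem supNorm_le_of_mem_box (hd : d ≠ 0) {x : Vtx d} {R : ℝ} (h : x ∈ box d R) :
    (supNorm x : ℝ) ≤ R := by
  obtain ⟨i, hi⟩ := exists_natAbs_eq_supNorm hd x
  rw [← hi]
  simpa using h i

theorem finite_setOf_edgeIn_box (hd : d ≠ 0) (R : ℝ) :
    {e : EdgeZ d | edgeIn d (box d R) e}.Finite :=
  ((finite_setOf_supNorm_le ⌊R⌋₊).prod Set.finite_univ).subset fun _ he =>
    ⟨Nat.le_floor (supNorm_le_of_mem_box hd he.1), trivial⟩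

theorem add_unit_apply (x : Vtx d) (j i : Fin d) :
    (x + unit d j) i = if i = j then x i + 1 else x i := by
  simp only [Pi.add_apply, unit]
  split <;> simp

theorem supNorm_add_unit_le (x : Vtx d) (j : Fin d) : supNorm (x + unit d j) ≤ supNorm x + 1 :=
  supNorm_le_iff.2 fun i => by
    have := natAbs_le_supNorm x i
    rw [add_unit_apply]
    split <;> omega

theorem supNorm_le_supNorm_add_unit (x : Vtx d) (j : Fin d) :
    supNorm x ≤ supNorm (x + unit d j) + 1 :=
  supNorm_le_iff.2 fun i => by
    have := natAbs_le_supNorm (x + unit d j) i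
    rw [add_unit_apply] at this
    split at this <;> omega

end SupNorm

section Sphere

variable {d r : ℕ}

def SphereAdj (r : ℕ) (u v : Vtx d) : Prop :=
  supNorm u = r ∧ supNorm v = r ∧ ∃ j, v = u + unit d j ∨ u = v + unit d j

instance : Std.Symm (SphereAdj (d := d) r) where
  symm _ _ := fun ⟨hu, hv, j, h⟩ => ⟨hv, hu, j, h.symm⟩

theorem update_add_one (x : Vtx d) (k : Fin d) (t : ℤ) :
    Function.update x k (t + 1) = Function.update x k t + unit d k := by
  ext i
  rw [add_unit_apply]
  by_cases hik : i = k
  · subst hik; simp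
  · simp [hik]

theorem reflTransGen_update {x : Vtx d} (hx : ∀ i, (x i).natAbs ≤ r) {a k : Fin d} (hak : a ≠ k)
    (ha : (x a).natAbs = r) :
    Relation.ReflTransGen (SphereAdj r) x (Function.update x k r) := by
  have hsphere : ∀ t : ℤ, t.natAbs ≤ r → supNorm (Function.update x k t) = r := fun t ht =>
    supNorm_eq_of_natAbs_eq (i := a)
      (fun i => by by_cases hik : i = k <;> simp [hik, ht, hx]) (by simp [hak, ha])
  have hxk := hx k
  have key : ∀ t, x k ≤ t → t ≤ r →
      Relation.ReflTransGen (SphereAdj r) x (Function.update x k t) := by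
    intro t ht
    induction t, ht using Int.leInduction with
    | base => exact fun _ => by rw [Function.update_eq_self]
    | succ t hkt ih =>
      intro ht
      refine (ih (by omega)).tail ⟨hsphere t (by omega), hsphere (t + 1) (by omega), k, ?_⟩
      exact Or.inl (update_add_one x k t)
  exact key r (by omega) le_rfl

theorem reflTransGen_fill {x : Vtx d} (hx : ∀ i, (x i).natAbs ≤ r) {j : Fin d} (hj : x j = r)
    (s : Finset (Fin d)) (hjs : j ∉ s) :
    Relation.ReflTransGen (SphereAdj r) x (fun i => if i ∈ s then (r : ℤ) else x i) := by
  induction s using Finset.induction_on with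
  | empty => exact .refl
  | @insert k s hks ih =>
    have hjk : j ≠ k := fun h => hjs (h ▸ Finset.mem_insert_self j s)
    have hjs' : j ∉ s := fun h => hjs (Finset.mem_insert_of_mem h)
    have hy : ∀ i, ((fun i => if i ∈ s then (r : ℤ) else x i) i).natAbs ≤ r := fun i => by
      dsimp only; split <;> simp [hx]
    have hupdate : Function.update (fun i => if i ∈ s then (r : ℤ) else x i) k r =
        fun i => if i ∈ insert k s then (r : ℤ) else x i := by
      ext i
      by_cases hik : i = k <;> simp [hik, hks]
    rw [← hupdate]
    exact (ih hjs').trans (reflTransGen_update hy hjk (by simp [hjs', hj]))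

/-- For `d ≥ 2` every point of the sphere is joined to the corner `(r, …, r)`: first raise a
coordinate other than a maximal one to `r`, then all the others. -/
theorem reflTransGen_corner (hd : 2 ≤ d) {x : Vtx d} (hx : supNorm x = r) :
    Relation.ReflTransGen (SphereAdj r) x (fun _ => (r : ℤ)) := by
  have hle : ∀ i, (x i).natAbs ≤ r := supNorm_le_iff.1 hx.le
  obtain ⟨a, ha⟩ := exists_natAbs_eq_supNorm (by omega) x
  obtain ⟨j, hja⟩ : ∃ j : Fin d, j ≠ a :=
    Fintype.exists_ne_of_one_lt_card (by simp; omega) a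
  rw [hx] at ha
  have hy : ∀ i, (Function.update x j (r : ℤ) i).natAbs ≤ r := fun i => by
    by_cases hij : i = j <;> simp [hij, hle]
  have hcorner : (fun i => if i ∈ Finset.univ.erase j then (r : ℤ) else Function.update x j r i)
      = fun _ => (r : ℤ) := by
    ext i
    by_cases hij : i = j <;> simp [hij]
  rw [← hcorner]
  exact (reflTransGen_update hle hja.symm ha).trans
    (reflTransGen_fill hy (by simp) _ (Finset.notMem_erase j _))

theorem reflTransGen_sphereAdj (hd : 2 ≤ d) {x y : Vtx d} (hx : supNorm x = r)
    (hy : supNorm y = r) : Relation.ReflTransGen (SphereAdj r) x y :=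
  (reflTransGen_corner hd hx).trans (symm (reflTransGen_corner hd hy))

theorem exists_mem_cut_of_supNorm_eq (hd : 2 ≤ d) {T : Set (Vtx d)} {w w' : Vtx d}
    (hw : supNorm w = r) (hw' : supNorm w' = r) (hwT : w ∈ T) (hw'T : w' ∉ T) :
    ∃ e ∈ cut (ends' d) T, supNorm e.1 = r ∧ supNorm (e.1 + unit d e.2) = r := by
  obtain ⟨u, v, ⟨hu, hv, j, huv | hvu⟩, huT, hvT⟩ :=
    (reflTransGen_sphereAdj hd hw hw').exists_boundary hwT hw'T
  · subst huv
    exact ⟨(u, j), Or.inl ⟨huT, hvT⟩, hu, hv⟩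
  · subst hvu
    exact ⟨(v, j), Or.inr ⟨hvT, huT⟩, hv, hu⟩

end Sphere

section Clusters

variable {d : ℕ} {X : Set (EdgeZ d)} {S : Set (Vtx d)} {ρ : ℝ}

theorem ConnIn.symm {a b : Vtx d} (h : ConnIn d X S a b) : ConnIn d X S b a := by
  have : Std.Symm fun u v : Vtx d =>
      (∃ e ∈ X, ends' d e = (u, v) ∨ ends' d e = (v, u)) ∧ u ∈ S ∧ v ∈ S :=
    ⟨fun _ _ ⟨⟨e, he, h⟩, hu, hv⟩ => ⟨⟨e, he, h.symm⟩, hv, hu⟩⟩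
  exact ⟨h.2.1, h.1, _root_.symm h.2.2⟩

theorem ConnIn.trans {a b c : Vtx d} (hab : ConnIn d X S a b) (hbc : ConnIn d X S b c) :
    ConnIn d X S a c :=
  ⟨hab.1, hbc.2.1, hab.2.2.trans hbc.2.2⟩

theorem mem_of_mem_clusters_of_connIn {C : Set (Vtx d)} (hC : C ∈ clusters d X ρ) {z w : Vtx d}
    (hz : z ∈ C) (hzw : ConnIn d X (box d ρ) z w) : w ∈ C := by
  obtain ⟨x, -, rfl⟩ := hC
  exact ConnIn.trans hz hzw

theorem eq_of_mem_clusters {C D : Set (Vtx d)} (hC : C ∈ clusters d X ρ)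
    (hD : D ∈ clusters d X ρ) {z : Vtx d} (hzC : z ∈ C) (hzD : z ∈ D) : C = D := by
  obtain ⟨x, -, rfl⟩ := hC
  obtain ⟨y, -, rfl⟩ := hD
  ext w
  exact ⟨fun hw => (hzD.trans hzC.symm).trans hw, fun hw => (hzC.trans hzD.symm).trans hw⟩

theorem notMem_sUnion_of_mem_clusters {𝒞 : Set (Set (Vtx d))} (h𝒞 : 𝒞 ⊆ clusters d X ρ)
    {C : Set (Vtx d)} (hC : C ∈ clusters d X ρ) (hC𝒞 : C ∉ 𝒞) {w : Vtx d} (hw : w ∈ C) :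
    w ∉ ⋃₀ 𝒞 := by
  rintro ⟨D, hD𝒞, hwD⟩
  exact hC𝒞 (eq_of_mem_clusters hC (h𝒞 hD𝒞) hw hwD ▸ hD𝒞)

/-- The infinite cluster of `z` leaves the ball of radius `r`; the first vertex of a path of `X`
at norm `r` is reached inside the box. -/
theorem exists_connIn_supNorm_eq (hX : EverywherePerc d X) {z : Vtx d} {r : ℕ}
    (hz : supNorm z ≤ r) (hr : (r : ℝ) ≤ ρ) :
    ∃ w, supNorm w = r ∧ ConnIn d X (box d ρ) z w := by
  obtain ⟨y, ⟨-, -, hzy⟩, hy⟩ : ∃ y, ConnIn d X Set.univ z y ∧ ¬ supNorm y ≤ r :=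
    not_forall_not.1 fun h => hX z ((finite_setOf_supNorm_le r).subset fun y hy => by
      by_contra h'; exact h y ⟨hy, h'⟩)
  have hstep : ∀ u v, ((∃ e ∈ X, ends' d e = (u, v) ∨ ends' d e = (v, u)) ∧
      u ∈ Set.univ ∧ v ∈ Set.univ) → supNorm v ≤ supNorm u + 1 := by
    rintro u v ⟨⟨e, -, he | he⟩, -⟩ <;> simp only [ends', Prod.mk.injEq] at he <;>
      obtain ⟨rfl, rfl⟩ := he
    · exact supNorm_add_unit_le e.1 e.2
    · exact supNorm_le_supNorm_add_unit e.1 e.2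
  obtain ⟨w, hw, hzw⟩ := hzy.exists_eq_level supNorm hstep hz (by omega)
  have hbox : ∀ {u : Vtx d}, supNorm u ≤ r → u ∈ box d ρ := fun hu =>
    mem_box_of_supNorm_le (le_trans (by exact_mod_cast hu) hr)
  refine ⟨w, hw, hbox hz, hbox hw.le, Relation.ReflTransGen.mono (fun u v huv => ?_) _ _ hzw⟩
  exact ⟨huv.1.1, hbox huv.2.1, hbox huv.2.2⟩

theorem exists_cut_edge_of_supNorm_le (hd : 2 ≤ d) (hX : EverywherePerc d X)
    {𝒞 : Set (Set (Vtx d))} (h𝒞 : 𝒞 ⊆ clusters d X ρ) {C C' : Set (Vtx d)} (hC : C ∈ 𝒞)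
    (hC' : C' ∈ clusters d X ρ) (hC'𝒞 : C' ∉ 𝒞) {z z' : Vtx d} (hz : z ∈ C) (hz' : z' ∈ C')
    {r : ℕ} (hzr : supNorm z ≤ r) (hz'r : supNorm z' ≤ r) (hr : (r : ℝ) ≤ ρ) :
    ∃ e ∈ cut (ends' d) (⋃₀ 𝒞), supNorm e.1 = r ∧ supNorm (e.1 + unit d e.2) = r := by
  obtain ⟨w, hw, hzw⟩ := exists_connIn_supNorm_eq hX hzr hr
  obtain ⟨w', hw', hzw'⟩ := exists_connIn_supNorm_eq hX hz'r hr
  exact exists_mem_cut_of_supNorm_eq hd hw hw'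
    ⟨C, hC, mem_of_mem_clusters_of_connIn (h𝒞 hC) hz hzw⟩
    (notMem_sUnion_of_mem_clusters h𝒞 hC' hC'𝒞 (mem_of_mem_clusters_of_connIn hC' hz' hzw'))

end Clusters

theorem stmt9_general (d n : ℕ) (hd : 2 ≤ d) (m : ℝ)
    (hbox : m + Real.sqrt n ≤ 8 * d * n)
    (X : Set (EdgeZ d)) (hX : EverywherePerc d X)
    (hU : ∀ C ∈ clusters d X (8 * d * n),
      (C ∩ box d (m + Real.sqrt n)).Nonempty → (C ∩ box d m).Nonempty)
    (𝒞 : Set (Set (Vtx d)))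
    (h𝒞 : 𝒞 ⊆ {C | C ∈ clusters d X (8 * d * n) ∧ (C ∩ box d (m + Real.sqrt n)).Nonempty})
    (hne : 𝒞.Nonempty)
    (hproper : ∃ C ∈ clusters d X (8 * d * n),
      (C ∩ box d (m + Real.sqrt n)).Nonempty ∧ C ∉ 𝒞) :
    Real.sqrt n ≤
      ({e : EdgeZ d | edgeIn d (box d (m + Real.sqrt n)) e ∧
        ((e.1 ∈ ⋃₀ 𝒞 ∧ e.1 + unit d e.2 ∉ ⋃₀ 𝒞) ∨
         (e.1 ∉ ⋃₀ 𝒞 ∧ e.1 + unit d e.2 ∈ ⋃₀ 𝒞))}).ncard := by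
  change Real.sqrt n ≤ ({e | edgeIn d (box d (m + Real.sqrt n)) e} ∩ cut (ends' d) (⋃₀ 𝒞)).ncard
  set B := m + Real.sqrt n
  set E := {e | edgeIn d (box d B) e} ∩ cut (ends' d) (⋃₀ 𝒞)
  obtain ⟨C, hC𝒞⟩ := hne
  obtain ⟨hC, hCB⟩ := h𝒞 hC𝒞
  obtain ⟨C', hC', hC'B, hC'𝒞⟩ := hproper
  obtain ⟨z, hzC, hz⟩ := hU C hC hCB
  obtain ⟨z', hz'C', hz'⟩ := hU C' hC' hC'B
  have hm : 0 ≤ m := (abs_nonneg _).trans (hz ⟨0, by omega⟩)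
  have hfloor : ∀ {x : Vtx d}, x ∈ box d m → supNorm x ≤ ⌊m⌋₊ := fun hx =>
    Nat.le_floor (supNorm_le_of_mem_box (by omega) hx)
  have hedges : Set.Icc ⌊m⌋₊ ⌊B⌋₊ ⊆ (fun e : EdgeZ d => supNorm e.1) '' E := by
    rintro r ⟨hmr, hrB⟩
    have hr : (r : ℝ) ≤ B := (Nat.le_floor_iff (by positivity)).1 hrB
    obtain ⟨e, he, h1, h2⟩ := exists_cut_edge_of_supNorm_le hd hX (fun D hD => (h𝒞 hD).1) hC𝒞
      hC' hC'𝒞 hzC hz'C' ((hfloor hz).trans hmr) ((hfloor hz').trans hmr) (hr.trans hbox)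
    exact ⟨e, ⟨⟨mem_box_of_supNorm_le (h1 ▸ hr), mem_box_of_supNorm_le (h2 ▸ hr)⟩, he⟩, h1⟩
  have hcount : ((⌊B⌋₊ + 1 - ⌊m⌋₊ : ℕ) : ℝ) ≤ E.ncard := by
    exact_mod_cast Set.add_one_sub_le_ncard_of_Icc_subset_image
      ((finite_setOf_edgeIn_box (by omega) B).subset Set.inter_subset_left) hedges
  have hmB : ⌊m⌋₊ ≤ ⌊B⌋₊ + 1 := (Nat.floor_mono (by simp [B])).trans (Nat.le_succ _)
  rw [Nat.cast_sub hmB] at hcount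
  push_cast at hcount
  linarith [Nat.lt_floor_add_one B, Nat.floor_le hm]

/-- if `U_{m,m+√n}(X) = 0`, any nonempty proper union of the clusters meeting
`Λ_{m+√n}` has edge boundary inside `Λ_{m+√n}` of size at least `√n`. -/
theorem stmt9 (d n : ℕ) (hd : 2 ≤ d) (hn : 1 ≤ n) (m : ℝ) (hm : (n : ℝ) ≤ m)
    (hbox : m + Real.sqrt n ≤ 8 * d * n)
    (X : Set (EdgeZ d)) (hX : EverywherePerc d X)
    (hU : ∀ C ∈ clusters d X (8 * d * n),
      (C ∩ box d (m + Real.sqrt n)).Nonempty → (C ∩ box d m).Nonempty)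
    (𝒞 : Set (Set (Vtx d)))
    (h𝒞 : 𝒞 ⊆ {C | C ∈ clusters d X (8 * d * n) ∧ (C ∩ box d (m + Real.sqrt n)).Nonempty})
    (hne : 𝒞.Nonempty)
    (hproper : ∃ C ∈ clusters d X (8 * d * n),
      (C ∩ box d (m + Real.sqrt n)).Nonempty ∧ C ∉ 𝒞) :
    Real.sqrt n ≤
      ({e : EdgeZ d | edgeIn d (box d (m + Real.sqrt n)) e ∧
        ((e.1 ∈ ⋃₀ 𝒞 ∧ e.1 + unit d e.2 ∉ ⋃₀ 𝒞) ∨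
         (e.1 ∉ ⋃₀ 𝒞 ∧ e.1 + unit d e.2 ∈ ⋃₀ 𝒞))}).ncard :=
  stmt9_general d n hd m hbox X hX hU 𝒞 h𝒞 hne hproper

end Perco
end
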